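/- Let f be a non-zero function on a signed graph Γ = (G,σ). Then for any three pairwise distinct weak nodal domains D_1, D_2, D_3 of f, the intersection of their vertex sets is empty: D_1 ∩ D_2 ∩ D_3 = ∅. -/

import Mathlib

open Matrix Polynomial

section NodalDefs

variable {V : Type*}

/-- The product of the signature over consecutive pairs of a list of vertices. -/
noncomputable def chainSign (σ : V → V → ℝ) (l : List V) : ℝ :=
  ((l.zip l.tail).map fun p => σ p.1 p.2).prod

/-- One step of a strong nodal domain walk. -/
def SWalkStep (G : SimpleGraph V) (σ : V → V → ℝ) (f : V → ℝ) (u v : V) : Prop :=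
  G.Adj u v ∧ 0 < f u * σ u v * f v

/-- `x` and `y` are connected by a strong nodal domain walk (S-walk). -/
def SConn (G : SimpleGraph V) (σ : V → V → ℝ) (f : V → ℝ) (x y : V) : Prop :=
  ∃ l : List V, 2 ≤ l.length ∧ l.Chain' (SWalkStep G σ f) ∧
    l.head? = some x ∧ l.getLast? = some y

/-- The strong nodal domain (as a vertex set) containing the non-zero `w`. -/
def strongClass (G : SimpleGraph V) (σ : V → V → ℝ) (f : V → ℝ) (w : V) : Set V :=
  {x | f x ≠ 0 ∧ (x = w ∨ SConn G σ f x w)}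

/-- The set of strong nodal domains (as vertex sets) of `f`. -/
def strongDomains (G : SimpleGraph V) (σ : V → V → ℝ) (f : V → ℝ) : Set (Set V) :=
  {D | ∃ w, f w ≠ 0 ∧ D = strongClass G σ f w}

/-- 𝔖(f): the number of strong nodal domains of `f`. -/
noncomputable def numStrong (G : SimpleGraph V) (σ : V → V → ℝ) (f : V → ℝ) : ℕ :=
  Nat.card (strongDomains G σ f)

/-- A list of vertices is a weak nodal domain walk (W-walk). -/
def IsWWalk (G : SimpleGraph V) (σ : V → V → ℝ) (f : V → ℝ) (l : List V) : Prop :=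
  2 ≤ l.length ∧ l.Chain' G.Adj ∧
    ∀ i j : Fin l.length, i < j → f (l.get i) ≠ 0 → f (l.get j) ≠ 0 →
      (∀ k : Fin l.length, i < k → k < j → f (l.get k) = 0) →
      0 < f (l.get i) * chainSign σ ((l.drop i.val).take (j.val - i.val + 1)) * f (l.get j)

/-- `x` and `y` are connected by a weak nodal domain walk (W-walk). -/
def WConn (G : SimpleGraph V) (σ : V → V → ℝ) (f : V → ℝ) (x y : V) : Prop :=
  ∃ l : List V, IsWWalk G σ f l ∧ l.head? = some x ∧ l.getLast? = some y

/-- The weak nodal domain (as a vertex set) associated with the class of the non-zero `w`: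
the class `W` of `w` together with all vertices having a W-walk to some vertex of `W`. -/
def weakClass (G : SimpleGraph V) (σ : V → V → ℝ) (f : V → ℝ) (w : V) : Set V :=
  {x | (f x ≠ 0 ∧ (x = w ∨ WConn G σ f x w)) ∨
       ∃ u, f u ≠ 0 ∧ (u = w ∨ WConn G σ f u w) ∧ WConn G σ f x u}

/-- The set of weak nodal domains (as vertex sets) of `f`. -/
def weakDomains (G : SimpleGraph V) (σ : V → V → ℝ) (f : V → ℝ) : Set (Set V) :=
  {D | ∃ w, f w ≠ 0 ∧ D = weakClass G σ f w}

/-- 𝔚(f): the number of weak nodal domains of `f`. -/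
noncomputable def numWeak (G : SimpleGraph V) (σ : V → V → ℝ) (f : V → ℝ) : ℕ :=
  Nat.card (weakDomains G σ f)

/-- `σ` is a valid signature on `G`: symmetric and ±1-valued on edges. -/
def IsSignature (G : SimpleGraph V) (σ : V → V → ℝ) : Prop :=
  (∀ x y, σ x y = σ y x) ∧ ∀ x y, G.Adj x y → σ x y = 1 ∨ σ x y = -1

/-- `M` is compatible with the signed graph `(G, σ)`: `(G, σ)` is the induced
signed graph of `M`. -/
def Compatible (M : Matrix V V ℝ) (G : SimpleGraph V) (σ : V → V → ℝ) : Prop :=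
  (∀ x y, G.Adj x y ↔ x ≠ y ∧ M x y ≠ 0) ∧
  (∀ x y, G.Adj x y → σ x y = -(M x y / |M x y|))

/-- A signed graph is balanced if every cycle has positive sign. -/
def IsBalanced (G : SimpleGraph V) (σ : V → V → ℝ) : Prop :=
  ∀ (x : V) (p : G.Walk x x), p.IsCycle → chainSign σ p.support = 1

/-- A signed graph is antibalanced if its negation is balanced. -/
def IsAntibalanced (G : SimpleGraph V) (σ : V → V → ℝ) : Prop :=
  IsBalanced G (fun x y => -(σ x y))

/-- ℓ(G) = |E| - |V| + c(G), the cyclomatic number of `G`. -/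
noncomputable def cyclomatic (G : SimpleGraph V) : ℕ :=
  Nat.card G.edgeSet + Nat.card G.ConnectedComponent - Nat.card V

/-- The subgraph of `G` on the edges `{x,y}` with `f x * σ x y * f y > 0`. -/
def posSubgraph (G : SimpleGraph V) (σ : V → V → ℝ) (f : V → ℝ) : SimpleGraph V where
  Adj x y := G.Adj x y ∧ 0 < f x * σ x y * f y ∧ 0 < f y * σ y x * f x
  symm := ⟨fun _ _ h => ⟨h.1.symm, h.2.2, h.2.1⟩⟩
  loopless := ⟨fun x h => G.loopless.irrefl x h.1⟩

/-- `x` is tree-like: removing `x` and its incident edges increases the number of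
connected components by `d_x - 1`. -/
def IsTreeLike (G : SimpleGraph V) (x : V) : Prop :=
  Nat.card (SimpleGraph.induce {y | y ≠ x} G).ConnectedComponent + 1
    = Nat.card G.ConnectedComponent + Nat.card (G.neighborSet x)

/-- The Fiedler zero set of `f` on `G`. -/
def fiedlerZeroSet (G : SimpleGraph V) (f : V → ℝ) : Set V :=
  {x | f x = 0 ∧ ((∀ y, G.Adj x y → f y = 0) ∨ ¬ IsTreeLike G x)}

end NodalDefs

/-!
A vertex `x` with `f x ≠ 0` lies in a single weak nodal domain, because `R_W` is an equivalence
relation (W-walks can be reversed, and concatenated at a non-zero vertex). If `f x = 0`, every weak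
nodal domain containing `x` is reached by a W-walk from `x`; cutting it at its first non-zero
vertex `a` gives a walk `x … a` through zeros, to which we attach the sign of
`f a · σ(x … a)`. Two such walks from `x` with the same sign glue, after reversing one of them,
into a walk whose only non-zeros are its two ends and whose sign condition holds: a W-walk joining
the two domains, which therefore coincide. With only two signs available, `x` lies in at most two
weak nodal domains.
-/

namespace List

variable {α : Type*}

theorem take_drop_eq_cons_append {l : List α} {i j : ℕ} (hij : i < j)
    (hj : j < l.length) :
    (l.drop i).take (j - i + 1) = l[i] :: ((l.drop (i + 1)).take (j - i - 1) ++ [l[j]]) := by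
  rw [drop_eq_getElem_cons (by omega), take_succ_cons,
    show j - i = j - i - 1 + 1 by omega, take_add_one]
  simp [show i + 1 + (j - i - 1) = j by omega]

theorem mem_take_drop_iff {l : List α} {i n : ℕ} {c : α} :
    c ∈ (l.drop i).take n ↔ ∃ (t : ℕ) (_ : i ≤ t ∧ t < i + n) (ht : t < l.length), l[t] = c := by
  rw [mem_iff_getElem]
  constructor
  · rintro ⟨t, ht, rfl⟩
    simp only [length_take, length_drop] at ht
    exact ⟨i + t, by omega, by omega, by simp⟩
  · rintro ⟨t, ht, ht', rfl⟩
    exact ⟨t - i, by simp only [length_take, length_drop]; omega,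
      by simp [show i + (t - i) = t by omega]⟩

theorem eq_of_cons_append_infix {a b a' b' : α} {m t : List α}
    (h : a' :: (m ++ [b']) <:+: a :: (t ++ [b])) (ha' : a' ∉ t) (hb' : b' ∉ t) :
    a' :: (m ++ [b']) = a :: (t ++ [b]) := by
  rcases infix_cons_iff.mp h with h | h
  · rw [show a :: (t ++ [b]) = (a :: t) ++ [b] from rfl] at h ⊢
    rcases prefix_concat_iff.mp h with h | h
    · exact h
    · obtain ⟨r, hr, hrt⟩ := (prefix_cons_iff.mp h).resolve_left (by simp)
      obtain ⟨-, rfl⟩ := cons_eq_cons.mp hr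
      exact absurd (hrt.mem (by simp)) hb'
  · rcases infix_concat_iff.mp h with h | h
    · obtain ⟨r, hr, hrt⟩ := (suffix_concat_iff.mp h).resolve_left (by simp)
      rw [← cons_append] at hr
      obtain ⟨rfl, -⟩ := append_inj' hr rfl
      exact absurd (hrt.mem mem_cons_self) ha'
    · exact absurd (h.mem mem_cons_self) ha'

theorem mem_of_cons_append_eq_append_cons {a b u : α} {m w₁ w₂ : List α}
    (h : a :: (m ++ [b]) = w₁ ++ u :: w₂) (h₁ : w₁ ≠ []) (h₂ : w₂ ≠ []) : u ∈ m := by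
  obtain ⟨c, w₁, rfl⟩ := exists_cons_of_ne_nil h₁
  obtain ⟨w₂, d, rfl⟩ := (eq_nil_or_concat' w₂).resolve_left h₂
  rw [cons_append, cons_eq_cons, ← cons_append, ← append_assoc] at h
  simp [(append_inj' h.2 rfl).1]

theorem IsChain.reverse_of_symm {R : α → α → Prop} (hR : Std.Symm R) {l : List α}
    (h : l.IsChain R) : l.reverse.IsChain R :=
  isChain_reverse.mpr (h.imp fun a b => hR.symm a b)

end List

theorem pos_mul_or_pos_mul_or_pos_mul {a b c : ℝ} (ha : a ≠ 0) (hb : b ≠ 0) (hc : c ≠ 0) :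
    0 < a * b ∨ 0 < a * c ∨ 0 < b * c := by
  by_contra! h
  have hprod := mul_nonpos_of_nonneg_of_nonpos (mul_nonneg_of_nonpos_of_nonpos h.1 h.2.1) h.2.2
  have hsq : 0 < (a * b * c) ^ 2 := by positivity
  linarith

section WeakNodalDomains

variable {V : Type*}

theorem chainSign_cons_cons (σ : V → V → ℝ) (a b : V) (l : List V) :
    chainSign σ (a :: b :: l) = σ a b * chainSign σ (b :: l) := by
  simp [chainSign]

theorem chainSign_append_cons (σ : V → V → ℝ) (l₁ : List V) (x : V) (l₂ : List V) :
    chainSign σ (l₁ ++ x :: l₂) = chainSign σ (l₁ ++ [x]) * chainSign σ (x :: l₂) := by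
  induction l₁ with
  | nil => simp [chainSign]
  | cons a l ih =>
    cases l with
    | nil => simp [chainSign]
    | cons b l => simp only [List.cons_append, chainSign_cons_cons] at ih ⊢; rw [ih, mul_assoc]

theorem chainSign_reverse {σ : V → V → ℝ} (hσ : ∀ x y, σ x y = σ y x) (l : List V) :
    chainSign σ l.reverse = chainSign σ l := by
  induction l with
  | nil => rfl
  | cons a l ih =>
    cases l with
    | nil => rfl
    | cons b l =>
      rw [List.reverse_cons, List.reverse_cons, List.append_assoc, List.singleton_append,
        chainSign_append_cons, ← List.reverse_cons, ih, chainSign_cons_cons, chainSign_cons_cons,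
        hσ]
      simp [chainSign, mul_comm]

theorem chainSign_ne_zero {G : SimpleGraph V} {σ : V → V → ℝ}
    (hσ : ∀ x y, G.Adj x y → σ x y = 1 ∨ σ x y = -1) {l : List V}
    (hl : l.IsChain G.Adj) : chainSign σ l ≠ 0 := by
  induction l with
  | nil => simp [chainSign]
  | cons a l ih =>
    cases l with
    | nil => simp [chainSign]
    | cons b l =>
      rw [List.isChain_cons_cons] at hl
      rw [chainSign_cons_cons]
      refine mul_ne_zero ?_ (ih hl.2)
      rcases hσ a b hl.1 with h | h <;> simp [h]

variable {G : SimpleGraph V} {σ : V → V → ℝ} {f : V → ℝ}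

/-- The sign condition of `IsWWalk`, stated for infixes of the walk instead of index pairs. -/
def PositiveGaps (σ : V → V → ℝ) (f : V → ℝ) (l : List V) : Prop :=
  ∀ a m b, a :: (m ++ [b]) <:+: l → f a ≠ 0 → f b ≠ 0 → (∀ c ∈ m, f c = 0) →
    0 < f a * chainSign σ (a :: (m ++ [b])) * f b

theorem IsWWalk.positiveGaps {l : List V} (h : IsWWalk G σ f l) : PositiveGaps σ f l := by
  obtain ⟨-, -, h⟩ := h
  intro a m b hseg ha hb hm
  obtain ⟨k, hk, hget⟩ := List.infix_iff_getElem?.mp hseg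
  simp only [List.length_cons, List.length_append, List.length_nil] at hk hget
  have hsub : (l.drop k).take (k + m.length + 1 - k + 1) = a :: (m ++ [b]) := by
    refine List.ext_getElem? fun t => ?_
    by_cases ht : t < m.length + 2
    · rw [List.getElem?_take_of_lt (by omega), List.getElem?_drop, add_comm, hget t (by omega),
        List.getElem?_eq_getElem]
    · rw [List.getElem?_eq_none (by grind), List.getElem?_eq_none (by grind)]
  have heq := hsub
  rw [List.take_drop_eq_cons_append (by omega) (by omega)] at heq
  obtain ⟨ha', hm', hb'⟩ : l[k] = a ∧ _ = m ∧ l[k + m.length + 1] = b := by simpa using heq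
  have key := h ⟨k, by omega⟩ ⟨k + m.length + 1, by omega⟩ (by simp)
    (by simpa [ha'] using ha) (by simpa [hb'] using hb) fun ⟨t, ht⟩ h₁ h₂ =>
      hm _ (hm' ▸ List.mem_take_drop_iff.mpr ⟨t, by rw [Fin.mk_lt_mk] at h₁ h₂; omega, ht, rfl⟩)
  simpa [ha', hb', hsub] using key

theorem isWWalk_iff {l : List V} :
    IsWWalk G σ f l ↔ 2 ≤ l.length ∧ l.IsChain G.Adj ∧ PositiveGaps σ f l := by
  refine ⟨fun h => ⟨h.1, h.2.1, h.positiveGaps⟩, fun ⟨hlen, hc, h⟩ => ⟨hlen, hc, ?_⟩⟩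
  rintro ⟨i, hi⟩ ⟨j, hj⟩ hij ha hb hzero
  simp only [Fin.mk_lt_mk, List.get_eq_getElem] at hij ha hb ⊢
  have hseg := List.take_drop_eq_cons_append hij hj
  rw [hseg]
  refine h _ _ _ ?_ ha hb fun c hc => ?_
  · rw [← hseg]
    exact (List.take_prefix _ _).isInfix.trans (List.drop_suffix _ _).isInfix
  · obtain ⟨t, ht, ht', rfl⟩ := List.mem_take_drop_iff.mp hc
    exact hzero ⟨t, ht'⟩ (Fin.mk_lt_mk.mpr (by omega)) (Fin.mk_lt_mk.mpr (by omega))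

theorem PositiveGaps.infix {l l' : List V} (h : PositiveGaps σ f l) (h' : l' <:+: l) :
    PositiveGaps σ f l' :=
  fun a m b hs => h a m b (hs.trans h')

theorem PositiveGaps.reverse (hσ : ∀ x y, σ x y = σ y x) {l : List V}
    (h : PositiveGaps σ f l) : PositiveGaps σ f l.reverse := by
  intro a m b hs ha hb hm
  have hrev : (a :: (m ++ [b])).reverse = b :: (m.reverse ++ [a]) := by simp
  have hba := h b m.reverse a (by rw [← hrev, ← List.reverse_infix, List.reverse_reverse]; exact hs)
    hb ha (by simpa using hm)
  rw [← chainSign_reverse hσ, hrev]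
  linarith

theorem PositiveGaps.append {l₁ l₂ : List V} {u : V} (hu : f u ≠ 0)
    (h₁ : PositiveGaps σ f (l₁ ++ [u])) (h₂ : PositiveGaps σ f (u :: l₂)) :
    PositiveGaps σ f (l₁ ++ u :: l₂) := by
  intro a m b hs ha hb hm
  rcases List.infix_append_iff_ne_nil.mp hs with hs | hs | ⟨w₁, w₂, hw₁, hw₂, hw, hw₁s, hw₂p⟩
  · exact h₁ a m b (List.infix_append_of_infix_left hs) ha hb hm
  · exact h₂ a m b hs ha hb hm
  · obtain ⟨w₂, rfl, -⟩ := (List.prefix_cons_iff.mp hw₂p).resolve_left hw₂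
    rcases eq_or_ne w₂ [] with rfl | hne
    · refine h₁ a m b ?_ ha hb hm
      obtain ⟨p, hp⟩ := hw₁s
      exact ⟨p, [], by simp [hw, ← hp]⟩
    · exact absurd (hm u (List.mem_of_cons_append_eq_append_cons hw hw₁ hne)) hu

theorem positiveGaps_of_forall_mem_eq_zero {a b : V} {t : List V} (ht : ∀ c ∈ t, f c = 0)
    (h : 0 < f a * chainSign σ (a :: (t ++ [b])) * f b) : PositiveGaps σ f (a :: (t ++ [b])) := by
  intro a' m b' hs ha hb _
  have heq := List.eq_of_cons_append_infix hs (fun h' => ha (ht _ h')) (fun h' => hb (ht _ h'))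
  obtain ⟨rfl, rfl, rfl⟩ : a' = a ∧ m = t ∧ b' = b := by simpa using heq
  exact h

theorem IsWWalk.infix {l l' : List V} (h : IsWWalk G σ f l) (h' : l' <:+: l)
    (hlen : 2 ≤ l'.length) : IsWWalk G σ f l' := by
  obtain ⟨-, hc, hg⟩ := isWWalk_iff.mp h
  exact isWWalk_iff.mpr ⟨hlen, hc.infix h', hg.infix h'⟩

theorem IsWWalk.reverse (hσ : ∀ x y, σ x y = σ y x) {l : List V} (h : IsWWalk G σ f l) :
    IsWWalk G σ f l.reverse := by
  obtain ⟨hlen, hc, hg⟩ := isWWalk_iff.mp h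
  exact isWWalk_iff.mpr ⟨by simpa using hlen, hc.reverse_of_symm G.symm, hg.reverse hσ⟩

theorem WConn.symm (hσ : ∀ x y, σ x y = σ y x) {x y : V} (h : WConn G σ f x y) :
    WConn G σ f y x := by
  obtain ⟨l, hl, hx, hy⟩ := h
  exact ⟨l.reverse, hl.reverse hσ, by simpa using hy, by simpa using hx⟩

theorem WConn.trans {x u y : V} (hu : f u ≠ 0) (h₁ : WConn G σ f x u) (h₂ : WConn G σ f u y) :
    WConn G σ f x y := by
  obtain ⟨l₁, hl₁, hx, hu₁⟩ := h₁
  obtain ⟨l₂, hl₂, hu₂, hy⟩ := h₂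
  obtain ⟨p, v, rfl⟩ := (List.eq_nil_or_concat' l₁).resolve_left (by rintro rfl; simp at hu₁)
  obtain rfl : v = u := by simpa using hu₁
  obtain ⟨w, r, rfl⟩ := List.exists_cons_of_ne_nil (by rintro rfl; simp at hu₂ : l₂ ≠ [])
  obtain rfl : w = v := by simpa using hu₂
  obtain ⟨hlen₁, hc₁, hg₁⟩ := isWWalk_iff.mp hl₁
  obtain ⟨hlen₂, hc₂, hg₂⟩ := isWWalk_iff.mp hl₂
  refine ⟨p ++ w :: r, isWWalk_iff.mpr ⟨?_, ?_, hg₁.append hu hg₂⟩, ?_, ?_⟩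
  · simp only [List.length_append, List.length_cons, List.length_nil] at hlen₁ hlen₂ ⊢
    omega
  · simpa using hc₁.append_overlap (l₂ := [w]) hc₂ (by simp)
  · simpa using hx
  · simpa using hy

theorem eq_or_wconn_symm (hσ : ∀ x y, σ x y = σ y x) {x y : V}
    (h : x = y ∨ WConn G σ f x y) : y = x ∨ WConn G σ f y x :=
  h.imp Eq.symm (WConn.symm hσ)

theorem eq_or_wconn_trans {x v y : V} (hv : f v ≠ 0) (h₁ : x = v ∨ WConn G σ f x v)
    (h₂ : v = y ∨ WConn G σ f v y) : x = y ∨ WConn G σ f x y := by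
  rcases h₁ with rfl | h₁
  · exact h₂
  · rcases h₂ with rfl | h₂
    · exact Or.inr h₁
    · exact Or.inr (h₁.trans hv h₂)

theorem eq_or_wconn_of_mem_weakClass {x w : V} (h : x ∈ weakClass G σ f w) :
    x = w ∨ WConn G σ f x w := by
  rcases h with ⟨-, h⟩ | ⟨u, hu, huw, hxu⟩
  · exact h
  · exact eq_or_wconn_trans hu (Or.inr hxu) huw

theorem weakClass_subset {w w' : V} (hw : f w ≠ 0) (h : w = w' ∨ WConn G σ f w w') :
    weakClass G σ f w ⊆ weakClass G σ f w' := by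
  rintro x (⟨hx, hxw⟩ | ⟨u, hu, huw, hxu⟩)
  · exact Or.inl ⟨hx, eq_or_wconn_trans hw hxw h⟩
  · exact Or.inr ⟨u, hu, eq_or_wconn_trans hw huw h, hxu⟩

theorem weakClass_eq (hσ : ∀ x y, σ x y = σ y x) {w w' : V} (hw : f w ≠ 0) (hw' : f w' ≠ 0)
    (h : w = w' ∨ WConn G σ f w w') : weakClass G σ f w = weakClass G σ f w' :=
  (weakClass_subset hw h).antisymm (weakClass_subset hw' (eq_or_wconn_symm hσ h))

theorem weakClass_eq_of_mem (hσ : ∀ x y, σ x y = σ y x) {x w₁ w₂ : V} (hx : f x ≠ 0)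
    (hw₁ : f w₁ ≠ 0) (hw₂ : f w₂ ≠ 0) (h₁ : x ∈ weakClass G σ f w₁)
    (h₂ : x ∈ weakClass G σ f w₂) : weakClass G σ f w₁ = weakClass G σ f w₂ :=
  weakClass_eq hσ hw₁ hw₂ <| eq_or_wconn_trans hx
    (eq_or_wconn_symm hσ (eq_or_wconn_of_mem_weakClass h₁)) (eq_or_wconn_of_mem_weakClass h₂)

def IsZeroRun (G : SimpleGraph V) (f : V → ℝ) (x : V) (z : List V) (a : V) : Prop :=
  (x :: (z ++ [a])).IsChain G.Adj ∧ ∀ c ∈ x :: z, f c = 0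

theorem WConn.exists_isZeroRun {x u : V} (hx : f x = 0) (hu : f u ≠ 0) (h : WConn G σ f x u) :
    ∃ z a, IsZeroRun G f x z a ∧ f a ≠ 0 ∧ (a = u ∨ WConn G σ f a u) := by
  obtain ⟨l, hl, hlx, hlu⟩ := h
  obtain ⟨a, hfind⟩ : ∃ a, l.find? (fun c => f c ≠ 0) = some a :=
    Option.isSome_iff_exists.mp (List.find?_isSome.mpr ⟨u, List.mem_of_getLast? hlu, by simpa⟩)
  obtain ⟨ha, q, r, rfl, hq⟩ := List.find?_eq_some_iff_append.mp hfind
  obtain ⟨c, z, rfl⟩ := List.exists_cons_of_ne_nil (by rintro rfl; simp_all : q ≠ [])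
  obtain rfl : c = x := by simpa using hlx
  refine ⟨z, a, ⟨(isWWalk_iff.mp hl).2.1.prefix ⟨r, by simp⟩, by simpa using hq⟩,
    by simpa using ha, ?_⟩
  rw [List.getLast?_append] at hlu
  rcases r with _ | ⟨d, r⟩
  · exact Or.inl (by simpa using hlu)
  · exact Or.inr ⟨a :: d :: r, hl.infix List.infix_append_right (by simp), rfl, by simpa using hlu⟩

theorem wconn_of_isZeroRun (hσ : ∀ x y, σ x y = σ y x) {x a₁ a₂ : V} {z₁ z₂ : List V}
    (h₁ : IsZeroRun G f x z₁ a₁) (h₂ : IsZeroRun G f x z₂ a₂)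
    (hs : 0 < f a₁ * chainSign σ (x :: (z₁ ++ [a₁])) * (f a₂ * chainSign σ (x :: (z₂ ++ [a₂])))) :
    WConn G σ f a₁ a₂ := by
  set t := z₁.reverse ++ x :: z₂
  have hrev : (x :: (z₁ ++ [a₁])).reverse = a₁ :: z₁.reverse ++ [x] := by simp
  have hsplit : a₁ :: (t ++ [a₂]) = a₁ :: z₁.reverse ++ [x] ++ (z₂ ++ [a₂]) := by simp [t]
  have hsign : chainSign σ (a₁ :: (t ++ [a₂]))
      = chainSign σ (x :: (z₁ ++ [a₁])) * chainSign σ (x :: (z₂ ++ [a₂])) := by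
    rw [hsplit, List.append_assoc, List.singleton_append, chainSign_append_cons, ← hrev,
      chainSign_reverse hσ]
  refine ⟨a₁ :: (t ++ [a₂]), isWWalk_iff.mpr ⟨by simp, ?_, ?_⟩, rfl,
    by rw [← List.cons_append, List.getLast?_concat]⟩
  · rw [hsplit]
    exact (hrev ▸ h₁.1.reverse_of_symm G.symm).append_overlap h₂.1 (by simp)
  -- all interior vertices are zeros, so the only gap to check is the whole walk
  · refine positiveGaps_of_forall_mem_eq_zero (fun c hc => ?_) ?_
    · simp only [t, List.mem_append, List.mem_reverse] at hc
      rcases hc with hc | hc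
      · exact h₁.2 c (List.mem_cons_of_mem x hc)
      · exact h₂.2 c hc
    · rw [hsign]
      linarith [hs]

def ReachesWithSign (G : SimpleGraph V) (σ : V → V → ℝ) (f : V → ℝ) (x w : V) (s : ℝ) : Prop :=
  ∃ z a, IsZeroRun G f x z a ∧ (a = w ∨ WConn G σ f a w) ∧
    s = f a * chainSign σ (x :: (z ++ [a]))

theorem exists_reachesWithSign (hσ : ∀ x y, G.Adj x y → σ x y = 1 ∨ σ x y = -1) {x w : V}
    (hx : f x = 0) (hw : f w ≠ 0) (h : x ∈ weakClass G σ f w) :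
    ∃ s ≠ 0, ReachesWithSign G σ f x w s := by
  have hxw : WConn G σ f x w :=
    (eq_or_wconn_of_mem_weakClass h).resolve_left (by rintro rfl; exact hw hx)
  obtain ⟨z, a, hr, ha, haw⟩ := hxw.exists_isZeroRun hx hw
  exact ⟨_, mul_ne_zero ha (chainSign_ne_zero hσ hr.1), z, a, hr, haw, rfl⟩

theorem weakClass_eq_of_reachesWithSign (hσ : ∀ x y, σ x y = σ y x) {x w₁ w₂ : V} {s₁ s₂ : ℝ}
    (hw₁ : f w₁ ≠ 0) (hw₂ : f w₂ ≠ 0) (h₁ : ReachesWithSign G σ f x w₁ s₁)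
    (h₂ : ReachesWithSign G σ f x w₂ s₂) (hs : 0 < s₁ * s₂) :
    weakClass G σ f w₁ = weakClass G σ f w₂ := by
  obtain ⟨z₁, a₁, hr₁, haw₁, rfl⟩ := h₁
  obtain ⟨z₂, a₂, hr₂, haw₂, rfl⟩ := h₂
  have ha₁ : f a₁ ≠ 0 := left_ne_zero_of_mul (left_ne_zero_of_mul hs.ne')
  have ha₂ : f a₂ ≠ 0 := left_ne_zero_of_mul (right_ne_zero_of_mul hs.ne')
  have ha₁₂ : WConn G σ f a₁ a₂ := wconn_of_isZeroRun hσ hr₁ hr₂ hs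
  exact weakClass_eq hσ hw₁ hw₂ <| eq_or_wconn_trans ha₁ (eq_or_wconn_symm hσ haw₁)
    (eq_or_wconn_trans ha₂ (Or.inr ha₁₂) haw₂)

end WeakNodalDomains

theorem stmt_7_general {V : Type*} (G : SimpleGraph V) (σ : V → V → ℝ)
    (hσ : IsSignature G σ) (f : V → ℝ)
    (D₁ D₂ D₃ : Set V)
    (h1 : D₁ ∈ weakDomains G σ f) (h2 : D₂ ∈ weakDomains G σ f)
    (h3 : D₃ ∈ weakDomains G σ f)
    (h12 : D₁ ≠ D₂) (h13 : D₁ ≠ D₃) (h23 : D₂ ≠ D₃) :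
    D₁ ∩ D₂ ∩ D₃ = ∅ := by
  obtain ⟨hσs, hσpm⟩ := hσ
  obtain ⟨w₁, hw₁, rfl⟩ := h1
  obtain ⟨w₂, hw₂, rfl⟩ := h2
  obtain ⟨w₃, hw₃, rfl⟩ := h3
  refine Set.eq_empty_of_forall_notMem fun x ⟨⟨hx₁, hx₂⟩, hx₃⟩ => ?_
  by_cases hx : f x = 0
  · obtain ⟨s₁, hs₁, hr₁⟩ := exists_reachesWithSign hσpm hx hw₁ hx₁
    obtain ⟨s₂, hs₂, hr₂⟩ := exists_reachesWithSign hσpm hx hw₂ hx₂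
    obtain ⟨s₃, hs₃, hr₃⟩ := exists_reachesWithSign hσpm hx hw₃ hx₃
    rcases pos_mul_or_pos_mul_or_pos_mul hs₁ hs₂ hs₃ with h | h | h
    · exact h12 (weakClass_eq_of_reachesWithSign hσs hw₁ hw₂ hr₁ hr₂ h)
    · exact h13 (weakClass_eq_of_reachesWithSign hσs hw₁ hw₃ hr₁ hr₃ h)
    · exact h23 (weakClass_eq_of_reachesWithSign hσs hw₂ hw₃ hr₂ hr₃ h)
  · exact h12 (weakClass_eq_of_mem hσs hx hw₁ hw₂ hx₁ hx₂)

/-- three pairwise distinct weak nodal domains have empty intersection. -/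
theorem stmt_7 {V : Type*} [Fintype V] (G : SimpleGraph V) (σ : V → V → ℝ)
    (hσ : IsSignature G σ) (f : V → ℝ) (hf : f ≠ 0)
    (D₁ D₂ D₃ : Set V)
    (h1 : D₁ ∈ weakDomains G σ f) (h2 : D₂ ∈ weakDomains G σ f)
    (h3 : D₃ ∈ weakDomains G σ f)
    (h12 : D₁ ≠ D₂) (h13 : D₁ ≠ D₃) (h23 : D₂ ≠ D₃) :
    D₁ ∩ D₂ ∩ D₃ = ∅ :=
  stmt_7_general G σ hσ f D₁ D₂ D₃ h1 h2 h3 h12 h13 h23
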